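/- arXiv:2211.08869 — 2 statements merged into one kernel-verified Lean document; each statement's English description precedes it below -/
import Mathlib

section
/- Let G be a 2-generated group containing a normal, non-abelian maximal subgroup M with Z(G) properly contained in Z(M), and let x ∈ M \ Z(M) and z ∈ Z(M) \ Z(G). Then x and z lie in distinct connected components of the non-commuting, non-generating graph nc(G) if and only if K ∩ M = Z(M) for every maximal subgroup K of G distinct from M. Otherwise, the distance d(x,z) in nc(G) is at most 4. -/
open Subgroup

namespace NC

variable {G : Type*} [Group G]

/-- The centre of a subgroup `H`, realised as a subgroup of the ambient group `G`. -/
def centerOf (H : Subgroup G) : Subgroup G := H ⊓ Subgroup.centralizer (H : Set G)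

/-- `H` is a maximal subgroup of `K` (both subgroups of the ambient group `G`). -/
def IsMaximalIn (H K : Subgroup G) : Prop :=
  H < K ∧ ∀ T : Subgroup G, H < T → T ≤ K → T = K

/-- The non-commuting, non-generating graph of `G`: vertices `x, y` are adjacent
iff they do not commute and do not generate `G`.  (Central elements are isolated
vertices here; the paper simply removes them from the vertex set.) -/
def ncGraph (G : Type*) [Group G] : SimpleGraph G where
  Adj x y := x * y ≠ y * x ∧ Subgroup.closure {x, y} ≠ ⊤
  symm := by
    constructor
    intro x y h
    exact ⟨fun e => h.1 e.symm, by rw [Set.pair_comm]; exact h.2⟩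
  loopless := by
    constructor
    intro x h
    exact h.1 rfl

/-- The conjugate `g H g⁻¹` of a subgroup `H` by an element `g`. -/
def conjSub (g : G) (H : Subgroup G) : Subgroup G := H.map (MulAut.conj g).toMonoidHom

/-- "The quotient of `G` by the subgroup `H` is cyclic": every coset of `H` is a
power of a fixed coset.  For `H` normal this says exactly that `G/H` is cyclic. -/
def QuotCyclic (H : Subgroup G) : Prop := ∃ g : G, ∀ x : G, ∃ n : ℤ, x⁻¹ * g ^ n ∈ H

/-- `P` is a Sylow `p`-subgroup of `G`. -/
def IsSylowIn (p : ℕ) (P : Subgroup G) : Prop :=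
  IsPGroup p P ∧ ∀ R : Subgroup G, IsPGroup p R → P ≤ R → R = P

/-- The Frattini subgroup of a subgroup `P` (the intersection of the maximal
subgroups of `P`), realised as a subgroup of the ambient group. -/
def phiIn (P : Subgroup G) : Subgroup G := P ⊓ sInf {W : Subgroup G | IsMaximalIn W P}

/-- `G` has exactly two conjugacy classes of maximal subgroups. -/
def TwoMaxClasses (G : Type*) [Group G] : Prop :=
  ∃ K L : Subgroup G, IsCoatom K ∧ IsCoatom L ∧ (∀ g : G, conjSub g K ≠ L) ∧
    ∀ T : Subgroup G, IsCoatom T → (∃ g : G, T = conjSub g K) ∨ (∃ g : G, T = conjSub g L)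

/-- The induced subgraph of the non-commuting, non-generating graph on the
actual vertex set `G \ Z(G)`. -/
def ncSubgraph (G : Type*) [Group G] := (ncGraph G).induce {x : G | x ∉ Subgroup.center G}

/-!
Since `M` is maximal and `z` is central in `M` but not in `G`, the centraliser of `z` is exactly
`M`; and `z` generates nothing with an element `w ∉ M`, because `Z(M)⟨w⟩ = G` would make
`M = Z(M)(M ∩ ⟨w⟩)` abelian. So `z` is adjacent to every vertex outside `M`, and `x` is joined to
`z` as soon as some `u ∈ M \ Z(M)` has a neighbour outside `M` (inside `M` the non-commuting graph
has diameter at most `2`). If no such edge exists, then for a maximal `K ≠ M` every element of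
`(K ∩ M) \ Z(M)` centralises `K`, since `K \ M` generates `K`. When `Z(M) ≤ K` and
`K ∩ M ≠ Z(M)`, this makes `z` centralise `K ⊄ M`; when `Z(M) ⊄ K`, it makes `K ∩ M` abelian
with `M = (K ∩ M) Z(M)`.

Conversely, if `K ∩ M = Z(M)` for all maximal `K ≠ M`, then every edge at a vertex of `M \ Z(M)`
lies in a maximal subgroup (`G` is finitely generated), necessarily `M`, so the component of `x`
stays inside `M \ Z(M)` and misses `z`.
-/

open scoped Pointwise

lemma mem_centerOf_iff {M : Subgroup G} {g : G} :
    g ∈ centerOf M ↔ g ∈ M ∧ ∀ m ∈ M, Commute m g := by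
  simp [centerOf, Subgroup.mem_inf, Subgroup.mem_centralizer_iff, Commute, SemiconjBy]

lemma centerOf_le (M : Subgroup G) : centerOf M ≤ M := inf_le_left

instance centerOf_normal {M : Subgroup G} [hMn : M.Normal] : (centerOf M).Normal := by
  constructor
  intro n hn g
  rw [mem_centerOf_iff] at hn ⊢
  refine ⟨hMn.conj_mem n hn.1 g, fun m hm => ?_⟩
  have hm' : g⁻¹ * m * g ∈ M := by simpa using hMn.conj_mem m hm g⁻¹
  simpa [mul_assoc] using (hn.2 _ hm').conj g

lemma closure_pair_le {K : Subgroup G} {u v : G} (hu : u ∈ K) (hv : v ∈ K) :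
    Subgroup.closure {u, v} ≤ K := by
  rw [Subgroup.closure_le]
  rintro g (rfl | rfl) <;> assumption

lemma ncGraph_adj_of_mem {K : Subgroup G} (hK : K ≠ ⊤) {u v : G} (hu : u ∈ K) (hv : v ∈ K)
    (h : ¬ Commute u v) : (ncGraph G).Adj u v :=
  ⟨h, fun htop => hK (top_unique (htop ▸ closure_pair_le hu hv))⟩

lemma isCoatomic_of_closure_pair_eq_top {a b : G} (hab : Subgroup.closure {a, b} = ⊤) :
    IsCoatomic (Subgroup G) := by
  refine CompleteLattice.coatomic_of_top_compact ?_
  rw [CompleteLattice.isCompactElement_iff_le_of_directed_sSup_le]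
  intro s hs hdir htop
  have hmem : ∀ g : G, ∃ T ∈ s, g ∈ T := fun g =>
    (Subgroup.mem_sSup_of_directedOn hs hdir).mp (htop (Subgroup.mem_top g))
  obtain ⟨Ta, hTa, haT⟩ := hmem a
  obtain ⟨Tb, hTb, hbT⟩ := hmem b
  obtain ⟨T, hT, hTaT, hTbT⟩ := hdir Ta hTa Tb hTb
  exact ⟨T, hT, hab ▸ closure_pair_le (hTaT haT) (hTbT hbT)⟩

section MaximalNormal

variable {M : Subgroup G}

lemma centralizer_singleton_eq_of_mem_centerOf (hM : IsCoatom M) {z : G}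
    (hz : z ∈ centerOf M) (hzZ : z ∉ Subgroup.center G) :
    Subgroup.centralizer {z} = M := by
  have hMC : M ≤ Subgroup.centralizer {z} := fun m hm => by
    rw [Subgroup.mem_centralizer_singleton_iff]
    exact ((mem_centerOf_iff.mp hz).2 m hm).eq
  refine ((hM.le_iff.mp hMC).resolve_left fun htop => hzZ ?_)
  rw [Subgroup.centralizer_eq_top_iff_subset, Set.singleton_subset_iff] at htop
  exact htop

lemma mem_of_commute_of_mem_centerOf (hM : IsCoatom M) {z g : G}
    (hz : z ∈ centerOf M) (hzZ : z ∉ Subgroup.center G) (hzg : Commute z g) : g ∈ M := by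
  rw [← centralizer_singleton_eq_of_mem_centerOf hM hz hzZ,
    Subgroup.mem_centralizer_singleton_iff]
  exact hzg.eq.symm

lemma le_centerOf_sup_inf [M.Normal] {H : Subgroup G} (hH : centerOf M ⊔ H = ⊤) :
    M ≤ centerOf M ⊔ H ⊓ M := by
  intro m hm
  have hmul : (centerOf M : Set G) * ↑(H ⊓ M) = ↑(centerOf M ⊔ H) ∩ (M : Set G) := by
    rw [Subgroup.mul_inf_assoc _ _ _ (centerOf_le M), Subgroup.normal_mul]
  have : m ∈ (centerOf M : Set G) * ↑(H ⊓ M) := by rw [hmul, hH]; exact ⟨trivial, hm⟩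
  obtain ⟨s, hs, h, hh, rfl⟩ := this
  exact Subgroup.mul_mem _ (Subgroup.mem_sup_left hs) (Subgroup.mem_sup_right hh)

lemma commute_of_le_centerOf_sup {H : Subgroup G} (hHM : H ≤ M)
    (hH : ∀ a ∈ H, ∀ b ∈ H, Commute a b) (hle : M ≤ centerOf M ⊔ H) :
    ∀ a ∈ M, ∀ b ∈ M, Commute a b := by
  have hcomm :
      ∀ a ∈ (centerOf M : Set G) ∪ H, ∀ b ∈ (centerOf M : Set G) ∪ H, a * b = b * a := by
    rintro a (ha | ha) b (hb | hb)
    · exact ((mem_centerOf_iff.mp hb).2 a (centerOf_le M ha)).eq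
    · exact ((mem_centerOf_iff.mp ha).2 b (hHM hb)).eq.symm
    · exact ((mem_centerOf_iff.mp hb).2 a (hHM ha)).eq
    · exact (hH a ha b hb).eq
  intro a ha b hb
  rw [Subgroup.sup_eq_closure] at hle
  have hcc := Subgroup.closure_le_centralizer_centralizer ((centerOf M : Set G) ∪ H)
  exact Set.centralizer_centralizer_comm_of_comm hcomm _ (hcc (hle ha)) _ (hcc (hle hb))

lemma centerOf_sup_ne_top [M.Normal] (hMna : ∃ a ∈ M, ∃ b ∈ M, a * b ≠ b * a)
    {H : Subgroup G} (hH : ∀ a ∈ H ⊓ M, ∀ b ∈ H ⊓ M, Commute a b) :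
    centerOf M ⊔ H ≠ ⊤ := fun htop => by
  obtain ⟨a, ha, b, hb, hab⟩ := hMna
  exact hab (commute_of_le_centerOf_sup inf_le_right hH (le_centerOf_sup_inf htop) a ha b hb)

lemma ncGraph_adj_of_mem_centerOf_of_not_mem (hM : IsCoatom M) [M.Normal]
    (hMna : ∃ a ∈ M, ∃ b ∈ M, a * b ≠ b * a) {z w : G} (hz : z ∈ centerOf M)
    (hzZ : z ∉ Subgroup.center G) (hw : w ∉ M) : (ncGraph G).Adj z w := by
  refine ⟨fun h => hw (mem_of_commute_of_mem_centerOf hM hz hzZ h), fun htop => ?_⟩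
  refine centerOf_sup_ne_top hMna (H := Subgroup.closure {w}) ?_ (top_unique ?_)
  · rintro a ⟨ha, -⟩ b ⟨hb, -⟩
    obtain ⟨i, rfl⟩ := Subgroup.mem_closure_singleton.mp ha
    obtain ⟨j, rfl⟩ := Subgroup.mem_closure_singleton.mp hb
    exact Commute.zpow_zpow_self w i j
  · exact htop ▸ closure_pair_le (Subgroup.mem_sup_left hz)
      (Subgroup.mem_sup_right (Subgroup.subset_closure rfl))

lemma exists_not_commute_of_not_mem_centerOf {c : G} (hc : c ∈ M) (hcZ : c ∉ centerOf M) :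
    ∃ t ∈ M, ¬Commute t c := by
  by_contra! h
  exact hcZ (mem_centerOf_iff.mpr ⟨hc, h⟩)

lemma exists_walk_length_le_two (hM : M ≠ ⊤) {u v : G} (hu : u ∈ M) (huZ : u ∉ centerOf M)
    (hv : v ∈ M) (hvZ : v ∉ centerOf M) : ∃ p : (ncGraph G).Walk u v, p.length ≤ 2 := by
  have hwalk : ∀ t ∈ M, ¬Commute u t → ¬Commute t v →
      ∃ p : (ncGraph G).Walk u v, p.length ≤ 2 := fun t ht hut htv =>
    ⟨.cons (ncGraph_adj_of_mem hM hu ht hut) (.cons (ncGraph_adj_of_mem hM ht hv htv) .nil),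
      le_rfl⟩
  by_cases huv : Commute u v
  swap
  · exact ⟨.cons (ncGraph_adj_of_mem hM hu hv huv) .nil, by simp⟩
  obtain ⟨t, ht, htu⟩ := exists_not_commute_of_not_mem_centerOf hu huZ
  obtain ⟨s, hs, hsv⟩ := exists_not_commute_of_not_mem_centerOf hv hvZ
  by_cases htv : Commute t v
  swap
  · exact hwalk t ht (fun h => htu h.symm) htv
  by_cases hsu : Commute s u
  swap
  · exact hwalk s hs (fun h => hsu h.symm) hsv
  refine hwalk (t * s) (M.mul_mem ht hs) (fun h => htu ?_) (fun h => hsv ?_)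
  · simpa using (h.mul_right hsu.symm.inv_right).symm
  · simpa using htv.inv_left.mul_left h

lemma commute_of_forall_not_adj {K : Subgroup G} (hK : K ≠ ⊤) (hKM : ¬K ≤ M)
    (hno : ∀ u ∈ M, u ∉ centerOf M → ∀ w ∉ M, ¬(ncGraph G).Adj u w)
    {c : G} (hcK : c ∈ K) (hcM : c ∈ M) (hcZ : c ∉ centerOf M) {k : G} (hk : k ∈ K) :
    Commute c k := by
  have hout : ∀ w ∈ K, w ∉ M → Commute c w := fun w hwK hwM => by
    by_contra h
    exact hno c hcM hcZ w hwM (ncGraph_adj_of_mem hK hcK hwK h)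
  by_cases hkM : k ∈ M
  swap
  · exact hout k hk hkM
  obtain ⟨w, hwK, hwM⟩ := SetLike.not_le_iff_exists.mp hKM
  have hkw : k * w ∉ M := fun h => hwM (by simpa using M.mul_mem (M.inv_mem hkM) h)
  simpa using (hout _ (K.mul_mem hk hwK) hkw).mul_right (hout w hwK hwM).inv_right

lemma exists_adj_of_inf_ne_centerOf (hM : IsCoatom M) [M.Normal]
    (hMna : ∃ a ∈ M, ∃ b ∈ M, a * b ≠ b * a) {z : G} (hz : z ∈ centerOf M)
    (hzZ : z ∉ Subgroup.center G) {K : Subgroup G} (hK : IsCoatom K) (hKM : K ≠ M)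
    (hKMZ : K ⊓ M ≠ centerOf M) :
    ∃ u ∈ M, u ∉ centerOf M ∧ ∃ w ∉ M, (ncGraph G).Adj u w := by
  by_contra! hno
  have hKleM : ¬K ≤ M := fun h => hKM ((hK.le_iff.mp h).resolve_left hM.1).symm
  have key : ∀ c ∈ K ⊓ M, c ∉ centerOf M → ∀ k ∈ K, Commute c k := fun c hc hcZ k hk =>
    commute_of_forall_not_adj hK.1 hKleM hno hc.1 hc.2 hcZ hk
  by_cases hZK : centerOf M ≤ K
  · obtain ⟨c, hc, hcZ⟩ :=
      SetLike.exists_of_lt (lt_of_le_of_ne (le_inf hZK (centerOf_le M)) hKMZ.symm)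
    have hzc : z * c ∈ K ⊓ M := (K ⊓ M).mul_mem ⟨hZK hz, centerOf_le M hz⟩ hc
    have hzcZ : z * c ∉ centerOf M := fun h =>
      hcZ (by simpa using (centerOf M).mul_mem ((centerOf M).inv_mem hz) h)
    obtain ⟨w, hwK, hwM⟩ := SetLike.not_le_iff_exists.mp hKleM
    have hzw : Commute z w := by
      simpa using (key _ hzc hzcZ w hwK).mul_left (key c hc hcZ w hwK).inv_left
    exact hwM (mem_of_commute_of_mem_centerOf hM hz hzZ hzw)
  · refine centerOf_sup_ne_top hMna (fun a ha b hb => ?_) (hK.2 _ (right_lt_sup.mpr hZK))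
    by_cases haZ : a ∈ centerOf M
    · exact ((mem_centerOf_iff.mp haZ).2 b hb.2).symm
    · exact key a ha haZ b hb.1

lemma exists_walk_length_le_four (hM : IsCoatom M) [M.Normal]
    (hMna : ∃ a ∈ M, ∃ b ∈ M, a * b ≠ b * a) {x z : G} (hx : x ∈ M) (hxZ : x ∉ centerOf M)
    (hz : z ∈ centerOf M) (hzZ : z ∉ Subgroup.center G)
    (hbridge : ∃ u ∈ M, u ∉ centerOf M ∧ ∃ w ∉ M, (ncGraph G).Adj u w) :
    ∃ p : (ncGraph G).Walk x z, p.length ≤ 4 := by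
  obtain ⟨u, hu, huZ, w, hw, huw⟩ := hbridge
  obtain ⟨p, hp⟩ := exists_walk_length_le_two hM.1 hx hxZ hu huZ
  have hwz := (ncGraph_adj_of_mem_centerOf_of_not_mem hM hMna hz hzZ hw).symm
  exact ⟨p.append (.cons huw (.cons hwz .nil)), by simp; omega⟩

variable [IsCoatomic (Subgroup G)]

lemma mem_of_walk_of_forall_inf_eq_centerOf
    (hcond : ∀ K : Subgroup G, IsCoatom K → K ≠ M → K ⊓ M = centerOf M) {a b : G}
    (p : (ncGraph G).Walk a b) (ha : a ∈ M) (haZ : a ∉ centerOf M) :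
    b ∈ M ∧ b ∉ centerOf M := by
  induction p with
  | nil => exact ⟨ha, haZ⟩
  | @cons a c b hac _ ih =>
    obtain ⟨K, hK, hle⟩ :=
      (eq_top_or_exists_le_coatom (Subgroup.closure {a, c})).resolve_left hac.2
    have haK : a ∈ K := hle (Subgroup.subset_closure (Set.mem_insert a {c}))
    have hcK : c ∈ K := hle (Subgroup.subset_closure (Set.mem_insert_of_mem a rfl))
    obtain rfl | hKM := eq_or_ne K M
    · exact ih hcK fun hcZ => hac.1 ((mem_centerOf_iff.mp hcZ).2 a ha)
    · exact absurd (hcond K hK hKM ▸ ⟨haK, ha⟩) haZ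

end MaximalNormal

theorem statement_12_general (h2gen : ∃ a b : G, Subgroup.closure {a, b} = ⊤)
    {M : Subgroup G} (hM : IsCoatom M) (hMn : M.Normal)
    (hMna : ∃ a ∈ M, ∃ b ∈ M, a * b ≠ b * a)
    {x z : G} (hx : x ∈ M) (hxZ : x ∉ centerOf M)
    (hz : z ∈ centerOf M) (hzZ : z ∉ Subgroup.center G) :
    (¬ (ncGraph G).Reachable x z ↔
        ∀ K : Subgroup G, IsCoatom K → K ≠ M → K ⊓ M = centerOf M) ∧
      ((ncGraph G).Reachable x z → (ncGraph G).dist x z ≤ 4) := by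
  obtain ⟨a, b, hab⟩ := h2gen
  have := isCoatomic_of_closure_pair_eq_top hab
  have hdisc : (∀ K : Subgroup G, IsCoatom K → K ≠ M → K ⊓ M = centerOf M) →
      ¬(ncGraph G).Reachable x z := fun hcond ⟨p⟩ =>
    (mem_of_walk_of_forall_inf_eq_centerOf hcond p hx hxZ).2 hz
  have hnear : ∀ K : Subgroup G, IsCoatom K → K ≠ M → K ⊓ M ≠ centerOf M →
      ∃ p : (ncGraph G).Walk x z, p.length ≤ 4 := fun K hK hKM hKMZ =>
    exists_walk_length_le_four hM hMna hx hxZ hz hzZ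
      (exists_adj_of_inf_ne_centerOf hM hMna hz hzZ hK hKM hKMZ)
  refine ⟨⟨fun hnr K hK hKM => ?_, hdisc⟩, fun hr => ?_⟩
  · by_contra hKMZ
    obtain ⟨p, -⟩ := hnear K hK hKM hKMZ
    exact hnr ⟨p⟩
  · obtain ⟨K, hK, hKM, hKMZ⟩ : ∃ K : Subgroup G, IsCoatom K ∧ K ≠ M ∧ K ⊓ M ≠ centerOf M := by
      by_contra! hcond
      exact hdisc hcond hr
    obtain ⟨p, hp⟩ := hnear K hK hKM hKMZ
    exact (SimpleGraph.dist_le p).trans hp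

/-- Proposition 4.4(i) / `prop:xzdist`. -/
theorem statement_12 (h2gen : ∃ a b : G, Subgroup.closure {a, b} = ⊤)
    {M : Subgroup G} (hM : IsCoatom M) (hMn : M.Normal)
    (hMna : ∃ a ∈ M, ∃ b ∈ M, a * b ≠ b * a)
    (hZ : Subgroup.center G < centerOf M)
    {x z : G} (hx : x ∈ M) (hxZ : x ∉ centerOf M)
    (hz : z ∈ centerOf M) (hzZ : z ∉ Subgroup.center G) :
    (¬ (ncGraph G).Reachable x z ↔
        ∀ K : Subgroup G, IsCoatom K → K ≠ M → K ⊓ M = centerOf M) ∧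
      ((ncGraph G).Reachable x z → (ncGraph G).dist x z ≤ 4) :=
  statement_12_general h2gen hM hMn hMna hx hxZ hz hzZ

end NC
end

section
/- Let G be a finite 2-generated group containing a normal, non-abelian maximal subgroup M with Z(G) properly contained in Z(M), and let x ∈ M \ Z(M) and z ∈ Z(M) \ Z(G). If x and z lie in the same connected component of the non-commuting, non-generating graph nc(G), then the distance d(x,z) in nc(G) is at most 3. -/
open Subgroup

namespace NC

variable {G : Type*} [Group G]

/-!
Every `u ∉ M` is adjacent to `z`: it does not commute with `z` because `C_G(z) = M`, and
`⟨u, z⟩ ≤ Z(M)⟨u⟩ ≠ G` because `M` is non-abelian. So `d(x, z) ≤ 3` unless no path of length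
at most two leads from `x` out of `M`. In that case some `u₀ ∉ M` generates `G` together with `x`,
hence `G = X⟨u₀⟩` for the normal closure `X` of `x`. A subgroup cannot be the union of two
proper subgroups; applied to centralizers, this shows that `L ∩ M` centralizes `X` for every
maximal subgroup `L ⊄ M`. Consequently an element of `M` adjacent to a vertex outside `M`
centralizes both `X` and `M ∩ ⟨u₀⟩`, so it lies in `Z(M)`. The component of `x` therefore stays
inside `M \ Z(M)`, and `z` is not in it.
-/

lemma mem_centerOf {M : Subgroup G} {a : G} :
    a ∈ centerOf M ↔ a ∈ M ∧ ∀ m ∈ M, m * a = a * m := by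
  simp only [centerOf, mem_inf, mem_centralizer_iff, SetLike.mem_coe]

lemma centerOf_normal_s13 {M : Subgroup G} (hMn : M.Normal) : (centerOf M).Normal := by
  refine ⟨fun ζ hζ g => mem_centerOf.2 ⟨hMn.conj_mem ζ (mem_centerOf.1 hζ).1 g, fun m hm => ?_⟩⟩
  have hm' : g⁻¹ * m * g ∈ M := by simpa using hMn.conj_mem m hm g⁻¹
  have hcomm := (mem_centerOf.1 hζ).2 _ hm'
  calc m * (g * ζ * g⁻¹) = g * (g⁻¹ * m * g * ζ) * g⁻¹ := by group
    _ = g * (ζ * (g⁻¹ * m * g)) * g⁻¹ := by rw [hcomm]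
    _ = g * ζ * g⁻¹ * m := by group

lemma mem_centralizer_singleton_comm {a b : G} : a ∈ centralizer {b} ↔ b ∈ centralizer {a} := by
  simp only [mem_centralizer_singleton_iff, eq_comm]

lemma le_or_le_of_coe_subset_union {H A B : Subgroup G} (h : (H : Set G) ⊆ A ∪ B) :
    H ≤ A ∨ H ≤ B := by
  by_contra! hc
  obtain ⟨a, haH, haA⟩ := SetLike.not_le_iff_exists.1 hc.1
  obtain ⟨b, hbH, hbB⟩ := SetLike.not_le_iff_exists.1 hc.2
  have haB : a ∈ B := (h haH).resolve_left haA
  have hbA : b ∈ A := (h hbH).resolve_right hbB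
  rcases h (mul_mem haH hbH) with hab | hab
  · exact haA (by simpa using mul_mem hab (inv_mem hbA))
  · exact hbB (by simpa using mul_mem (inv_mem haB) hab)

lemma le_of_diff_subset {L W C : Subgroup G} (hLW : ¬ L ≤ W) (h : (L : Set G) \ W ⊆ C) :
    L ≤ C := by
  obtain ⟨k₀, hk₀L, hk₀W⟩ := SetLike.not_le_iff_exists.1 hLW
  intro k hk
  by_cases hkW : k ∈ W
  · have hkk₀ : k * k₀ ∉ W := fun hm => hk₀W (by simpa using mul_mem (inv_mem hkW) hm)
    simpa using mul_mem (h ⟨mul_mem hk hk₀L, hkk₀⟩) (inv_mem (h ⟨hk₀L, hk₀W⟩))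
  · exact h ⟨hk, hkW⟩

lemma centralizer_eq_of_mem_centerOf {M : Subgroup G} (hM : IsCoatom M) {z : G}
    (hz : z ∈ centerOf M) (hzZ : z ∉ center G) : centralizer {z} = M := by
  have hle : M ≤ centralizer {z} := fun m hm =>
    mem_centralizer_singleton_iff.2 ((mem_centerOf.1 hz).2 m hm)
  exact (hM.le_iff.1 hle).resolve_left fun htop => hzZ (centralizer_eq_top_iff_subset.1 htop rfl)

lemma exists_eq_mul_zpow {N : Subgroup G} [N.Normal] {u : G} (h : N ⊔ zpowers u = ⊤) (g : G) :
    ∃ n ∈ N, ∃ k : ℤ, g = n * u ^ k := by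
  have hg : g ∈ ((N ⊔ zpowers u : Subgroup G) : Set G) := by simp [h]
  rw [normal_mul] at hg
  obtain ⟨n, hn, w, hw, rfl⟩ := hg
  obtain ⟨k, rfl⟩ := mem_zpowers_iff.1 hw
  exact ⟨n, hn, k, rfl⟩

/-- `M = X (M ∩ ⟨u⟩)`, and an element of `M` centralizing `X` commutes with both factors. -/
lemma inf_centralizer_le_centerOf {X M : Subgroup G} [X.Normal] (hXM : X ≤ M) {u : G}
    (hXu : X ⊔ zpowers u = ⊤) (hpow : ∀ k : ℤ, u ^ k ∈ M → u ^ k ∈ centralizer X) :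
    M ⊓ centralizer X ≤ centerOf M := by
  have hdecomp : ∀ m ∈ M, ∃ ξ ∈ X, ∃ k : ℤ, m = ξ * u ^ k ∧ u ^ k ∈ centralizer X := by
    intro m hm
    obtain ⟨ξ, hξ, k, rfl⟩ := exists_eq_mul_zpow hXu m
    refine ⟨ξ, hξ, k, rfl, hpow k ?_⟩
    simpa using mul_mem (inv_mem (hXM hξ)) hm
  rintro m ⟨hmM, hmX⟩
  refine mem_centerOf.2 ⟨hmM, fun m' hm' => ?_⟩
  obtain ⟨ξ, hξ, k, rfl, -⟩ := hdecomp m hmM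
  obtain ⟨ξ', hξ', k', rfl, hk'X⟩ := hdecomp m' hm'
  have hξ'm : Commute ξ' (ξ * u ^ k) := mem_centralizer_iff.1 hmX ξ' hξ'
  have hk'm : Commute (u ^ k') (ξ * u ^ k) :=
    (Commute.symm (mem_centralizer_iff.1 hk'X ξ hξ)).mul_right (Commute.zpow_zpow_self u k' k)
  exact hξ'm.mul_left hk'm

lemma centerOf_sup_zpowers_ne_top {M : Subgroup G} (hMn : M.Normal)
    (hMna : ∃ a ∈ M, ∃ b ∈ M, a * b ≠ b * a) (u : G) : centerOf M ⊔ zpowers u ≠ ⊤ := by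
  intro h
  have := centerOf_normal_s13 hMn
  have hM_le : M ≤ centralizer (centerOf M) := fun m hm =>
    mem_centralizer_iff.2 fun ζ hζ => ((mem_centerOf.1 hζ).2 m hm).symm
  have hM_ab : M ≤ centerOf M := fun m hm =>
    inf_centralizer_le_centerOf inf_le_left h (fun k hk => hM_le hk) ⟨hm, hM_le hm⟩
  obtain ⟨a, ha, b, hb, hab⟩ := hMna
  exact hab ((mem_centerOf.1 (hM_ab hb)).2 a ha)

lemma ncGraph_adj_map (φ : G ≃* G) {a b : G} :
    (ncGraph G).Adj (φ a) (φ b) ↔ (ncGraph G).Adj a b := by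
  have hclosure : closure {φ a, φ b} = (closure {a, b}).map φ.toMonoidHom := by
    rw [MonoidHom.map_closure, Set.image_pair]; rfl
  have htop : (⊤ : Subgroup G).map φ.toMonoidHom = ⊤ :=
    map_top_of_surjective _ φ.surjective
  refine and_congr ?_ ?_
  · rw [← map_mul, ← map_mul, φ.injective.ne_iff]
  · rw [hclosure, Ne, (map_injective (f := φ.toMonoidHom) φ.injective).eq_iff' htop]

lemma ncGraph_adj_iff_of_mem {L : Subgroup G} (hL : L ≠ ⊤) {a b : G} (ha : a ∈ L) (hb : b ∈ L) :
    (ncGraph G).Adj a b ↔ a * b ≠ b * a := by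
  refine ⟨And.left, fun hab => ⟨hab, fun htop => hL (top_unique ?_)⟩⟩
  rw [← htop, closure_le, Set.insert_subset_iff, Set.singleton_subset_iff]
  exact ⟨ha, hb⟩

lemma exists_isCoatom_of_ncGraph_adj [IsCoatomic (Subgroup G)] {a b : G}
    (h : (ncGraph G).Adj a b) : ∃ L : Subgroup G, IsCoatom L ∧ a ∈ L ∧ b ∈ L := by
  obtain ⟨L, hL, hle⟩ := (eq_top_or_exists_le_coatom (closure {a, b})).resolve_left h.2
  exact ⟨L, hL, hle (subset_closure (by simp)), hle (subset_closure (by simp))⟩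

lemma ncGraph_adj_of_mem_centerOf {M : Subgroup G} (hM : IsCoatom M) (hMn : M.Normal)
    (hMna : ∃ a ∈ M, ∃ b ∈ M, a * b ≠ b * a) {z : G} (hz : z ∈ centerOf M)
    (hzZ : z ∉ center G) {u : G} (hu : u ∉ M) : (ncGraph G).Adj u z := by
  refine ⟨fun h => hu ?_, fun h => centerOf_sup_zpowers_ne_top hMn hMna u (top_unique ?_)⟩
  · rw [← centralizer_eq_of_mem_centerOf hM hz hzZ, mem_centralizer_singleton_iff]
    exact h
  · rw [← h, closure_le, Set.insert_subset_iff, Set.singleton_subset_iff]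
    exact ⟨mem_sup_right (mem_zpowers u), mem_sup_left hz⟩

lemma _root_.SimpleGraph.Reachable.mem_of_adj_closed {V : Type*} {Γ : SimpleGraph V} {S : Set V}
    (hS : ∀ a b, a ∈ S → Γ.Adj a b → b ∈ S) {a b : V} (h : Γ.Reachable a b) (ha : a ∈ S) :
    b ∈ S := by
  obtain ⟨p⟩ := h
  induction p with
  | nil => exact ha
  | cons hadj _ ih => exact ih (hS _ _ ha hadj)

section NoTwoStepExit

variable {M : Subgroup G} {z : G}

def NoTwoStepExit (M : Subgroup G) (x : G) : Prop :=
  ∀ v u, (ncGraph G).Adj x v → u ∉ M → ¬ (ncGraph G).Adj v u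

lemma inf_le_centralizer_of_noTwoStepExit (hM : IsCoatom M) (hz : z ∈ centerOf M)
    (hzZ : z ∉ center G) {x : G} (hx : x ∈ M)
    (hexit : NoTwoStepExit M x)
    {L : Subgroup G} (hL : IsCoatom L) (hLM : ¬ L ≤ M) : L ⊓ M ≤ centralizer {x} := by
  by_contra hcon
  obtain ⟨w₀, hw₀, hw₀x⟩ := SetLike.not_le_iff_exists.1 hcon
  -- `v ∈ L ⊓ M` not commuting with `x` is adjacent to `x`, so it must commute with `u ∈ L \ M`
  have hcomm : ∀ u ∈ L, u ∉ M → L ⊓ M ≤ centralizer {u} := by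
    intro u huL huM
    refine (le_or_le_of_coe_subset_union fun v hv => ?_).resolve_left hcon
    by_cases hvx : v ∈ centralizer {x}
    · exact Or.inl hvx
    have hxv : (ncGraph G).Adj x v := (ncGraph_adj_iff_of_mem hM.1 hx hv.2).2 fun h =>
      hvx (mem_centralizer_singleton_iff.2 h.symm)
    have hvu := hexit v u hxv huM
    rw [ncGraph_adj_iff_of_mem hL.1 hv.1 huL, not_not] at hvu
    exact Or.inr (mem_centralizer_singleton_iff.2 hvu)
  have hLw₀ : L ≤ centralizer {w₀} := le_of_diff_subset hLM fun u hu =>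
    mem_centralizer_singleton_comm.1 (hcomm u hu.1 hu.2 hw₀)
  have hCw₀ : centralizer {w₀} = L := (hL.le_iff.1 hLw₀).resolve_left fun htop =>
    hw₀x (mem_centralizer_singleton_comm.1 (htop ▸ mem_top x))
  obtain ⟨u₁, hu₁L, hu₁M⟩ := SetLike.not_le_iff_exists.1 hLM
  have hzL : z ∈ L :=
    hCw₀ ▸ mem_centralizer_singleton_iff.2 ((mem_centerOf.1 hz).2 w₀ hw₀.2).symm
  apply hu₁M
  rw [← centralizer_eq_of_mem_centerOf hM hz hzZ, mem_centralizer_singleton_comm]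
  exact hcomm u₁ hu₁L hu₁M ⟨hzL, (mem_centerOf.1 hz).1⟩

lemma NoTwoStepExit.conj (hMn : M.Normal) {x : G} (hexit : NoTwoStepExit M x) (g : G) :
    NoTwoStepExit M (g * x * g⁻¹) := by
  intro v u hxv hu hvu
  set φ := MulAut.conj g
  rw [← φ.apply_symm_apply v] at hxv hvu
  rw [← φ.apply_symm_apply u] at hu hvu
  refine hexit (φ.symm v) (φ.symm u) ((ncGraph_adj_map φ).1 hxv) (fun h => hu ?_)
    ((ncGraph_adj_map φ).1 hvu)
  exact hMn.conj_mem _ h g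

lemma inf_le_centralizer_normalClosure (hM : IsCoatom M) (hMn : M.Normal)
    (hz : z ∈ centerOf M) (hzZ : z ∉ center G) {x : G} (hx : x ∈ M)
    (hexit : NoTwoStepExit M x)
    {L : Subgroup G} (hL : IsCoatom L) (hLM : ¬ L ≤ M) :
    L ⊓ M ≤ centralizer (normalClosure {x}) := by
  intro w hw
  show w ∈ centralizer (closure (Group.conjugatesOfSet {x}) : Set G)
  rw [centralizer_closure, mem_centralizer_iff]
  intro y hy
  obtain ⟨a, ha, hconj⟩ := Group.mem_conjugatesOfSet_iff.1 hy
  obtain ⟨g, rfl⟩ := isConj_iff.1 (Set.mem_singleton_iff.1 ha ▸ hconj)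
  have := inf_le_centralizer_of_noTwoStepExit hM hz hzZ (hMn.conj_mem x hx g)
    (hexit.conj hMn g) hL hLM hw
  exact (mem_centralizer_singleton_iff.1 this).symm

lemma mem_centerOf_of_ncGraph_adj_of_noTwoStepExit [IsCoatomic (Subgroup G)] (hM : IsCoatom M)
    (hMn : M.Normal) (hMna : ∃ a ∈ M, ∃ b ∈ M, a * b ≠ b * a) (hz : z ∈ centerOf M)
    (hzZ : z ∉ center G) {x : G} (hx : x ∈ M)
    (hexit : NoTwoStepExit M x)
    {u₀ : G} (hu₀ : u₀ ∉ M) (hgen : closure {x, u₀} = ⊤)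
    {m u : G} (hm : m ∈ M) (hu : u ∉ M) (hmu : (ncGraph G).Adj m u) : m ∈ centerOf M := by
  have hXM : normalClosure {x} ≤ M := normalClosure_le_normal (by simpa using hx)
  have hXu : normalClosure {x} ⊔ zpowers u₀ = ⊤ := by
    rw [eq_top_iff, ← hgen, closure_le, Set.insert_subset_iff, Set.singleton_subset_iff]
    exact ⟨mem_sup_left (subset_normalClosure rfl), mem_sup_right (mem_zpowers u₀)⟩
  have hcent {L : Subgroup G} (hL : IsCoatom L) {w : G} (hwL : w ∈ L) (hwM : w ∉ M) :
      L ⊓ M ≤ centralizer (normalClosure {x}) :=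
    inf_le_centralizer_normalClosure hM hMn hz hzZ hx hexit hL fun h => hwM (h hwL)
  obtain ⟨L₀, hL₀, hu₀L₀, -⟩ := exists_isCoatom_of_ncGraph_adj
    (ncGraph_adj_of_mem_centerOf hM hMn hMna hz hzZ hu₀)
  obtain ⟨L, hL, hmL, huL⟩ := exists_isCoatom_of_ncGraph_adj hmu
  exact inf_centralizer_le_centerOf hXM hXu
    (fun k hk => hcent hL₀ hu₀L₀ hu₀ ⟨zpow_mem hu₀L₀ k, hk⟩) ⟨hm, hcent hL huL hu ⟨hmL, hm⟩⟩

theorem not_reachable_of_noTwoStepExit [IsCoatomic (Subgroup G)] (hM : IsCoatom M) (hMn : M.Normal)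
    (hMna : ∃ a ∈ M, ∃ b ∈ M, a * b ≠ b * a) (hz : z ∈ centerOf M) (hzZ : z ∉ center G)
    {x : G} (hx : x ∈ M) (hxZ : x ∉ centerOf M)
    (hexit₁ : ∀ u ∉ M, ¬ (ncGraph G).Adj x u)
    (hexit : NoTwoStepExit M x) :
    ¬ (ncGraph G).Reachable x z := by
  obtain ⟨u₀, hu₀, hxu₀⟩ : ∃ u₀ ∉ M, x * u₀ ≠ u₀ * x := by
    by_contra! h
    have hx_central : (⊤ : Subgroup G) ≤ centralizer {x} :=
      le_of_diff_subset (fun h => hM.1 (top_le_iff.1 h)) fun u hu =>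
        mem_centralizer_singleton_iff.2 (h u hu.2).symm
    exact hxZ (mem_centerOf.2 ⟨hx, fun m _ =>
      mem_centralizer_singleton_iff.1 (hx_central (mem_top m))⟩)
  have hgen : closure {x, u₀} = ⊤ := by
    by_contra h
    exact hexit₁ u₀ hu₀ ⟨hxu₀, h⟩
  -- the component of `x` stays inside `M \ Z(M)`, which does not contain `z`
  intro hreach
  refine (hreach.mem_of_adj_closed (S := {a | a ∈ M ∧ a ∉ centerOf M}) ?_ ⟨hx, hxZ⟩).2 hz
  rintro a b ⟨haM, haZ⟩ hab
  by_cases hbM : b ∈ M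
  · exact ⟨hbM, fun hb => hab.1 ((mem_centerOf.1 hb).2 a haM)⟩
  · exact absurd (mem_centerOf_of_ncGraph_adj_of_noTwoStepExit hM hMn hMna hz hzZ hx hexit hu₀ hgen
      haM hbM hab) haZ

end NoTwoStepExit

theorem statement_13_general [Finite G]
    {M : Subgroup G} (hM : IsCoatom M) (hMn : M.Normal)
    (hMna : ∃ a ∈ M, ∃ b ∈ M, a * b ≠ b * a)
    {x z : G} (hx : x ∈ M) (hxZ : x ∉ centerOf M)
    (hz : z ∈ centerOf M) (hzZ : z ∉ Subgroup.center G)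
    (hreach : (ncGraph G).Reachable x z) :
    (ncGraph G).dist x z ≤ 3 := by
  have hz_adj (u : G) (hu : u ∉ M) : (ncGraph G).Adj u z :=
    ncGraph_adj_of_mem_centerOf hM hMn hMna hz hzZ hu
  by_cases hexit₁ : ∃ u ∉ M, (ncGraph G).Adj x u
  · obtain ⟨u, hu, hxu⟩ := hexit₁
    exact (SimpleGraph.dist_le (.cons hxu (.cons (hz_adj u hu) .nil))).trans (by simp)
  by_cases hexit : ∃ v u, (ncGraph G).Adj x v ∧ u ∉ M ∧ (ncGraph G).Adj v u
  · obtain ⟨v, u, hxv, hu, hvu⟩ := hexit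
    exact SimpleGraph.dist_le (.cons hxv (.cons hvu (.cons (hz_adj u hu) .nil)))
  push Not at hexit₁ hexit
  exact absurd hreach (not_reachable_of_noTwoStepExit hM hMn hMna hz hzZ hx hxZ hexit₁ hexit)

/-- Proposition 4.4(iv) / `prop:xzdist`. -/
theorem statement_13 [Finite G] (h2gen : ∃ a b : G, Subgroup.closure {a, b} = ⊤)
    {M : Subgroup G} (hM : IsCoatom M) (hMn : M.Normal)
    (hMna : ∃ a ∈ M, ∃ b ∈ M, a * b ≠ b * a)
    (hZ : Subgroup.center G < centerOf M)
    {x z : G} (hx : x ∈ M) (hxZ : x ∉ centerOf M)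
    (hz : z ∈ centerOf M) (hzZ : z ∉ Subgroup.center G)
    (hreach : (ncGraph G).Reachable x z) :
    (ncGraph G).dist x z ≤ 3 :=
  statement_13_general hM hMn hMna hx hxZ hz hzZ hreach

end NC
end
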